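/- arXiv:2603.16865 — 2 statements merged into one kernel-verified Lean document; each statement's English description precedes it below -/
import Mathlib

section
/- Consider the block matrix M = [[H, Gᵀ, Aᵀ], [A, 0, 0], [−D_b G, D_μ, 0]] where H ∈ ℝ^{n×n}, G ∈ ℝ^{p×n}, A ∈ ℝ^{m×n} has full row rank, D_b ∈ ℝ^{p×p} and D_μ ∈ ℝ^{p×p} are diagonal with strictly negative diagonal entries, and there exists m_L > 0 such that vᵀ H v ≥ m_L‖v‖² for all v ∈ ker(A). Then M is nonsingular. -/
open Matrix

/-- Nonsingularity of the KKT block matrix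
`[[H, Gᵀ, Aᵀ], [A, 0, 0], [−D_b G, D_μ, 0]]`: the homogeneous block linear
system has only the trivial solution. -/
theorem kkt_block_nonsingular (n m p : ℕ)
    (H : Matrix (Fin n) (Fin n) ℝ) (G : Matrix (Fin p) (Fin n) ℝ)
    (A : Matrix (Fin m) (Fin n) ℝ)
    (db dμ : Fin p → ℝ) (hdb : ∀ j, db j < 0) (hdμ : ∀ j, dμ j < 0)
    (hA : Function.Injective fun μ : Fin m → ℝ => Aᵀ.mulVec μ)
    (mL : ℝ) (hmL : 0 < mL)
    (hH : ∀ v : Fin n → ℝ, A.mulVec v = 0 → mL * (v ⬝ᵥ v) ≤ v ⬝ᵥ H.mulVec v) :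
    ∀ (v₁ : Fin n → ℝ) (v₂ : Fin p → ℝ) (v₃ : Fin m → ℝ),
      H.mulVec v₁ + Gᵀ.mulVec v₂ + Aᵀ.mulVec v₃ = 0 →
      A.mulVec v₁ = 0 →
      -((Matrix.diagonal db * G).mulVec v₁) + (Matrix.diagonal dμ).mulVec v₂ = 0 →
      v₁ = 0 ∧ v₂ = 0 ∧ v₃ = 0 := by
  intro v₁ v₂ v₃ h1 h2 h3
  -- componentwise form of the third equation
  have h3' : ∀ j, dμ j * v₂ j = db j * (G.mulVec v₁) j := by
    intro j
    have := congrFun h3 j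
    simp [← Matrix.mulVec_mulVec, Matrix.mulVec_diagonal, Pi.add_apply, Pi.neg_apply] at this
    linarith
  have hv2 : ∀ j, v₂ j = (db j / dμ j) * (G.mulVec v₁) j := by
    intro j
    have hne : dμ j ≠ 0 := ne_of_lt (hdμ j)
    field_simp
    linarith [h3' j]
  -- dot the first equation with v₁
  have hdot : v₁ ⬝ᵥ H.mulVec v₁ + (G.mulVec v₁) ⬝ᵥ v₂ + (A.mulVec v₁) ⬝ᵥ v₃ = 0 := by
    have := congrArg (fun w => v₁ ⬝ᵥ w) h1
    simpa [Matrix.dotProduct_mulVec, Matrix.vecMul_transpose, dotProduct_add] using this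
  have hAterm : (A.mulVec v₁) ⬝ᵥ v₃ = 0 := by rw [h2]; simp
  have hSnonneg : 0 ≤ (G.mulVec v₁) ⬝ᵥ v₂ := by
    rw [dotProduct]
    apply Finset.sum_nonneg
    intro j _
    rw [hv2 j]
    have : 0 ≤ db j / dμ j := le_of_lt (div_pos_of_neg_of_neg (hdb j) (hdμ j))
    nlinarith [sq_nonneg ((G.mulVec v₁) j)]
  have hquad : v₁ ⬝ᵥ H.mulVec v₁ ≤ 0 := by linarith
  have hv1 : v₁ = 0 := by
    have h0 : v₁ ⬝ᵥ v₁ = 0 := by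
      have h' := hH v₁ h2
      have hnn : 0 ≤ v₁ ⬝ᵥ v₁ := by
        rw [dotProduct]; exact Finset.sum_nonneg fun i _ => mul_self_nonneg _
      nlinarith
    exact dotProduct_self_eq_zero.mp h0
  subst hv1
  have hv2z : v₂ = 0 := by
    funext j
    have := h3' j
    simp at this
    rcases this with h | h
    · exact absurd h (ne_of_lt (hdμ j))
    · simpa using h
  subst hv2z
  have hv3 : v₃ = 0 := by
    apply hA
    simpa using h1
  exact ⟨rfl, rfl, hv3⟩
end

section
/- Let L be the Laplacian of a connected graph on N vertices with algebraic connectivity λ₂ > 0, and let E ∈ ℝᴺ satisfy E_j = 0 for some fixed j. Then (1/2)EᵀLE ≥ (λ₂/(2(1+N)))·‖E‖². -/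
open Matrix

theorem pinned_laplacian_coercivity (N : ℕ) (hN : 0 < N)
    (A : Matrix (Fin N) (Fin N) ℝ) (hsymm : A.IsSymm)
    (hnonneg : ∀ i j, 0 ≤ A i j)
    (hconn : ∀ i j : Fin N, Relation.ReflTransGen (fun a b => 0 < A a b) i j)
    (L : Matrix (Fin N) (Fin N) ℝ)
    (hL : L = Matrix.diagonal (fun i => ∑ j, A i j) - A)
    (lam2 : ℝ) (hlam2 : 0 < lam2)
    (hfiedler : ∀ δ : Fin N → ℝ, (∑ i, δ i) = 0 →
      lam2 * (δ ⬝ᵥ δ) ≤ δ ⬝ᵥ L.mulVec δ)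
    (E : Fin N → ℝ) (j : Fin N) (hE : E j = 0) :
    lam2 / (2 * (1 + N)) * (E ⬝ᵥ E) ≤ (1 / 2) * (E ⬝ᵥ L.mulVec E) := by
  have hNr : (N:ℝ) ≠ 0 := Nat.cast_ne_zero.mpr hN.ne'
  set c : ℝ := (∑ i, E i) / N with hc
  set δ : Fin N → ℝ := fun i => E i - c with hδ
  have hsumE : (∑ i, E i) = N * c := by rw [hc]; field_simp
  have hsum : (∑ i, δ i) = 0 := by
    simp only [hδ, Finset.sum_sub_distrib, Finset.sum_const, Finset.card_univ,
      Fintype.card_fin, nsmul_eq_mul, hsumE, sub_self]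
  have hLsymm : Lᵀ = L := by
    rw [hL]
    simp [Matrix.transpose_sub, Matrix.diagonal_transpose, hsymm.eq]
  have hLconst : L.mulVec (fun _ => c) = 0 := by
    funext i
    simp [hL, Matrix.sub_mulVec, Matrix.mulVec, dotProduct, Matrix.diagonal,
      sub_mul, Finset.sum_sub_distrib, ← Finset.sum_mul, Finset.sum_ite_eq]
  have hE' : E = δ + (fun _ => c) := by funext i; simp [hδ]
  have hmv : L.mulVec E = L.mulVec δ := by
    rw [hE', Matrix.mulVec_add, hLconst, add_zero]
  have hquad : E ⬝ᵥ L.mulVec E = δ ⬝ᵥ L.mulVec δ := by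
    rw [hmv]
    nth_rewrite 1 [hE']
    rw [add_dotProduct]
    have h0 : (fun _ : Fin N => c) ⬝ᵥ L.mulVec δ = 0 := by
      rw [Matrix.dotProduct_mulVec, ← Matrix.mulVec_transpose, hLsymm, hLconst]
      simp
    rw [h0, add_zero]
  have hδj : δ j = -c := by simp [hδ, hE]
  have hc2 : c^2 ≤ δ ⬝ᵥ δ := by
    have h1 : c^2 = δ j * δ j := by rw [hδj]; ring
    rw [h1, dotProduct]
    exact Finset.single_le_sum (f := fun i => δ i * δ i)
      (fun i _ => mul_self_nonneg _) (Finset.mem_univ j)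
  have hEE : E ⬝ᵥ E = δ ⬝ᵥ δ + N * c^2 := by
    simp only [dotProduct, hδ]
    have hterm : ∀ i : Fin N, (E i - c)*(E i - c) = E i * E i - 2*c*E i + c^2 :=
      fun i => by ring
    rw [Finset.sum_congr rfl (fun i _ => hterm i), Finset.sum_add_distrib,
      Finset.sum_sub_distrib, ← Finset.mul_sum, hsumE, Finset.sum_const,
      Finset.card_univ, Fintype.card_fin, nsmul_eq_mul]
    ring
  have hEEle : E ⬝ᵥ E ≤ (1 + N) * (δ ⬝ᵥ δ) := by
    have hNc : (0:ℝ) ≤ N := Nat.cast_nonneg N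
    nlinarith [mul_le_mul_of_nonneg_left hc2 hNc]
  have hfied := hfiedler δ hsum
  rw [hquad]
  have h2N : (0:ℝ) < 2 * (1 + N) := by positivity
  calc lam2 / (2*(1+N)) * (E ⬝ᵥ E)
      ≤ lam2 / (2*(1+N)) * ((1+N)*(δ ⬝ᵥ δ)) :=
        mul_le_mul_of_nonneg_left hEEle (le_of_lt (div_pos hlam2 h2N))
    _ = lam2/2 * (δ ⬝ᵥ δ) := by field_simp
    _ ≤ (1/2) * (δ ⬝ᵥ L.mulVec δ) := by linarith [hfied]
end
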